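/- Let q be an odd prime, n ≥ 4, λ ∈ (ℤ/qℤ)*, and 𝒜, ℬ ⊆ (ℤ/qℤ)ⁿ. Let I_λ(𝒜,ℬ) be the number of pairs (a,b) ∈ 𝒜 × ℬ with a₁b₁ + ⋯ + aₙbₙ = λ. Then |I_λ(𝒜,ℬ) − |𝒜||ℬ|/(q(1−q^{−n}))| ≪ q^{n−1} q^{−(n−3)/4} √(|𝒜||ℬ|), with an absolute implied constant. -/

import Mathlib

/-!
Write `N(a)` for the number of `b ∈ B` with `a ⬝ᵥ b = λ`, so that `I_λ(A, B) = ∑_{a ∈ A} N(a)`.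
For `λ ≠ 0`, every nonzero `b` satisfies `a ⬝ᵥ b = λ` for exactly `q^{n-1}` vectors `a`, and two
distinct `b, b'` share at most `q^{n-2}` of them (either none, or the map `a ↦ (a ⬝ᵥ b, a ⬝ᵥ b')`
onto `𝔽_q²` is surjective). Hence the first two moments of `N` over all of `𝔽_qⁿ` are known well
enough to bound its variance about `|B|/q` by `2|B|q^{n-1}`, and Cauchy–Schwarz over `A` gives
`|I_λ(A, B) - |A||B|/q| ≤ √(qⁿ|A||B|)`. The factor `1 - q^{-n}` moves the main term by at most
`√(|A||B|)`, and `q^{n/2} ≤ q^{n-1} q^{-(n-3)/4}`.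
-/

open Finset

lemma AddMonoidHom.card_fiber_mul_card_of_surjective {G H : Type*} [AddGroup G] [Fintype G]
    [AddMonoid H] [Fintype H] [DecidableEq H] (f : G →+ H) (hf : Function.Surjective f) (y : H) :
    #{x | f x = y} * Fintype.card H = Fintype.card G := by
  have h := card_eq_sum_card_fiberwise (f := f) (s := univ) (t := univ) (by simp)
  rw [sum_congr rfl fun z _ => card_fiber_eq_of_mem_range f (hf z) (hf y), sum_const,
    card_univ, card_univ, smul_eq_mul] at h
  rw [h, mul_comm]

lemma abs_sum_sub_card_mul_le_sqrt {ι : Type*} [Fintype ι] (A : Finset ι) (N : ι → ℝ)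
    (c : ℝ) :
    |∑ a ∈ A, N a - #A * c| ≤ √(#A * ∑ a, (N a - c) ^ 2) := by
  apply Real.abs_le_sqrt
  calc (∑ a ∈ A, N a - #A * c) ^ 2 = (∑ a ∈ A, (N a - c)) ^ 2 := by
        rw [sum_sub_distrib, sum_const, nsmul_eq_mul]
    _ ≤ (#A : ℝ) * ∑ a ∈ A, (N a - c) ^ 2 := sq_sum_le_card_mul_sum_sq
    _ ≤ #A * ∑ a, (N a - c) ^ 2 := by
        gcongr
        exact subset_univ A

lemma sum_sub_div_sq_le {ι : Type*} [Fintype ι] (N : ι → ℝ) {q m β : ℝ} (hq : 2 ≤ q)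
    (hm0 : 0 ≤ m) (hm : m ≤ β) (hβ : β ≤ m + 1)
    (hsum : (∑ a, N a) * q = m * Fintype.card ι)
    (hsum_sq : (∑ a, N a ^ 2) * q ^ 2 ≤ m * Fintype.card ι * q + β ^ 2 * Fintype.card ι) :
    ∑ a, (N a - β / q) ^ 2 ≤ 2 * β * Fintype.card ι / q := by
  have hQ : (0 : ℝ) ≤ Fintype.card ι := Nat.cast_nonneg _
  have hq0 : 0 < q := by linarith
  have hexpand : (∑ a, (N a - β / q) ^ 2) * q ^ 2
      = (∑ a, N a ^ 2) * q ^ 2 - 2 * β * ((∑ a, N a) * q) + Fintype.card ι * β ^ 2 := by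
    simp only [sub_sq, sum_add_distrib, sum_sub_distrib, sum_const, card_univ, nsmul_eq_mul,
      ← sum_mul, ← mul_sum]
    field_simp
  rw [le_div_iff₀ hq0, ← mul_le_mul_iff_left₀ hq0, mul_assoc, ← sq, hexpand, hsum]
  nlinarith [mul_nonneg (mul_nonneg hQ hq0.le) (sub_nonneg.2 hm),
    mul_nonneg (mul_nonneg (hm0.trans hm) hQ) (by linarith : 0 ≤ q - 2 * (β - m))]

lemma abs_div_sub_div_one_sub_inv_pow_le {q x : ℝ} {n : ℕ} (hq : 2 ≤ q) (hn : n ≠ 0)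
    (hx0 : 0 ≤ x) (hx : x ≤ (q ^ n) ^ 2) :
    |x / q - x / (q * (1 - q⁻¹ ^ n))| ≤ √x := by
  rw [inv_pow]
  set Q := q ^ n
  have hQ : 2 ≤ Q := hq.trans (le_self_pow₀ (by linarith) hn)
  have hq0 : 0 < q := by linarith
  have hden : 0 < q * (Q - 1) := mul_pos hq0 (by linarith)
  have hdiff : x / q - x / (q * (1 - Q⁻¹)) = -(√x * √x / (q * (Q - 1))) := by
    rw [Real.mul_self_sqrt hx0]
    have : Q - 1 ≠ 0 := by linarith
    field_simp
    ring
  have hsqrt : √x ≤ Q := Real.sqrt_le_iff.2 ⟨by linarith, hx⟩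
  have hsqrt0 := Real.sqrt_nonneg x
  have hQle : Q ≤ q * (Q - 1) := by nlinarith
  rw [hdiff, abs_neg, abs_of_nonneg (div_nonneg (mul_nonneg hsqrt0 hsqrt0) hden.le),
    div_le_iff₀ hden]
  exact mul_le_mul_of_nonneg_left (hsqrt.trans hQle) hsqrt0

lemma sqrt_pow_le_pow_mul_rpow {q : ℝ} {n : ℕ} (hq : 1 ≤ q) (hn : 3 ≤ n) :
    √(q ^ n) ≤ q ^ (n - 1) * (q ^ (n - 3)) ^ (-(1 : ℝ) / 4) := by
  have hq0 : 0 ≤ q := by linarith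
  rw [Real.sqrt_eq_rpow, ← Real.rpow_natCast, ← Real.rpow_natCast, ← Real.rpow_natCast,
    ← Real.rpow_mul hq0, ← Real.rpow_mul hq0, ← Real.rpow_add (by linarith),
    Nat.cast_sub (by omega), Nat.cast_sub (by omega)]
  apply Real.rpow_le_rpow_of_exponent_le hq
  have : (3 : ℝ) ≤ n := by exact_mod_cast hn
  push_cast
  linarith

section dotProduct

variable {R ι : Type*} [Fintype ι]

@[simps]
def dotProductLeftHom [NonUnitalNonAssocSemiring R] (b : ι → R) : (ι → R) →+ R where
  toFun := (· ⬝ᵥ b)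
  map_zero' := zero_dotProduct b
  map_add' a a' := add_dotProduct a a' b

variable [Mul R] [AddCommMonoid R] [DecidableEq R]

def dotCount (B : Finset (ι → R)) (lam : R) (a : ι → R) : ℕ := #{b ∈ B | a ⬝ᵥ b = lam}

lemma card_filter_product_dotProduct_eq (A B : Finset (ι → R)) (lam : R) :
    #{ab ∈ A ×ˢ B | ab.1 ⬝ᵥ ab.2 = lam} = ∑ a ∈ A, dotCount B lam a := by
  rw [card_filter, sum_product]
  exact sum_congr rfl fun a _ => (card_filter _ _).symm

variable [Fintype R] [DecidableEq ι]

lemma sum_dotCount_eq (B : Finset (ι → R)) (lam : R) :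
    ∑ a, dotCount B lam a = ∑ b ∈ B, #{a : ι → R | a ⬝ᵥ b = lam} :=
  sum_card_bipartiteAbove_eq_sum_card_bipartiteBelow (fun a b => a ⬝ᵥ b = lam)

lemma sum_dotCount_sq_eq (B : Finset (ι → R)) (lam : R) :
    ∑ a, dotCount B lam a ^ 2
      = ∑ b ∈ B, ∑ b' ∈ B, #{a : ι → R | a ⬝ᵥ b = lam ∧ a ⬝ᵥ b' = lam} := by
  simp_rw [dotCount, sq, ← card_product, ← filter_product]
  rw [← sum_product']
  exact sum_card_bipartiteAbove_eq_sum_card_bipartiteBelow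
    (fun a (p : (ι → R) × (ι → R)) => a ⬝ᵥ p.1 = lam ∧ a ⬝ᵥ p.2 = lam)

end dotProduct

section FiniteField

variable {K ι : Type*} [Field K] [Fintype K] [DecidableEq K] [Fintype ι] [DecidableEq ι]

lemma card_filter_dotProduct_eq_mul {b : ι → K} (hb : b ≠ 0) (μ : K) :
    #{a : ι → K | a ⬝ᵥ b = μ} * Fintype.card K = Fintype.card K ^ Fintype.card ι := by
  obtain ⟨j, hj⟩ := Function.ne_iff.1 hb
  have hsurj : Function.Surjective (dotProductLeftHom b) := fun x =>
    ⟨Pi.single j (x / b j), by simp [single_dotProduct, div_mul_cancel₀ _ hj]⟩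
  rw [← Fintype.card_fun]
  exact (dotProductLeftHom b).card_fiber_mul_card_of_surjective hsurj μ

lemma card_filter_dotProduct_eq_and_eq_mul_le {b b' : ι → K} (hbb' : b ≠ b')
    {lam : K} (hlam : lam ≠ 0) :
    #{a : ι → K | a ⬝ᵥ b = lam ∧ a ⬝ᵥ b' = lam} * Fintype.card K ^ 2
      ≤ Fintype.card K ^ Fintype.card ι := by
  set f := (dotProductLeftHom b).prod (dotProductLeftHom b')
  have hfiber :
      #{a : ι → K | a ⬝ᵥ b = lam ∧ a ⬝ᵥ b' = lam} = #{a | f a = (lam, lam)} := by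
    simp [f, Prod.ext_iff]
  rcases eq_empty_or_nonempty {a | f a = (lam, lam)} with h0 | ⟨a₀, ha₀⟩
  · simp [hfiber, h0]
  obtain ⟨j, hj⟩ := Function.ne_iff.1 hbb'
  simp only [mem_filter, mem_univ, true_and, f, AddMonoidHom.prod_apply, Prod.ext_iff,
    dotProductLeftHom_apply] at ha₀
  -- The range of `f` contains `(lam, lam)` and `(b j, b' j)`, which span `K × K`.
  have hsurj : Function.Surjective f := by
    rintro ⟨x, y⟩
    have hd : b j - b' j ≠ 0 := sub_ne_zero.2 hj
    set t := (x - y) / (b j - b' j)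
    set s := (x - t * b j) / lam
    refine ⟨s • a₀ + Pi.single j t, ?_⟩
    simp only [f, AddMonoidHom.prod_apply, dotProductLeftHom_apply, add_dotProduct,
      smul_dotProduct, single_dotProduct, ha₀, smul_eq_mul, Prod.mk.injEq]
    have hs : s * lam = x - t * b j := div_mul_cancel₀ _ hlam
    have ht : t * (b j - b' j) = x - y := div_mul_cancel₀ _ hd
    exact ⟨by linear_combination hs, by linear_combination hs - ht⟩
  have h := f.card_fiber_mul_card_of_surjective hsurj (lam, lam)
  rw [Fintype.card_prod, Fintype.card_fun, ← sq] at h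
  rw [hfiber, h]

lemma sum_card_filter_dotProduct_eq_mul (B : Finset (ι → K)) {lam : K} (hlam : lam ≠ 0) :
    (∑ b ∈ B, #{a : ι → K | a ⬝ᵥ b = lam}) * Fintype.card K
      = #(B.erase 0) * Fintype.card K ^ Fintype.card ι := by
  have h0 : #{a : ι → K | a ⬝ᵥ 0 = lam} * Fintype.card K = 0 := by
    simp [dotProduct_zero, hlam.symm]
  rw [sum_mul,
    ← sum_erase (f := fun b => #{a : ι → K | a ⬝ᵥ b = lam} * Fintype.card K) B h0,
    sum_congr rfl fun b hb => card_filter_dotProduct_eq_mul (ne_of_mem_erase hb) lam,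
    sum_const, smul_eq_mul]

lemma sum_dotCount_mul (B : Finset (ι → K)) {lam : K} (hlam : lam ≠ 0) :
    (∑ a, dotCount B lam a) * Fintype.card K
      = #(B.erase 0) * Fintype.card K ^ Fintype.card ι := by
  rw [sum_dotCount_eq, sum_card_filter_dotProduct_eq_mul B hlam]

lemma sum_dotCount_sq_mul_le (B : Finset (ι → K)) {lam : K} (hlam : lam ≠ 0) :
    (∑ a, dotCount B lam a ^ 2) * Fintype.card K ^ 2
      ≤ #(B.erase 0) * Fintype.card K ^ Fintype.card ι * Fintype.card K
        + #B ^ 2 * Fintype.card K ^ Fintype.card ι := by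
  set q := Fintype.card K
  set Q := q ^ Fintype.card ι
  have hpair : ∀ b b', #{a : ι → K | a ⬝ᵥ b = lam ∧ a ⬝ᵥ b' = lam} * q ^ 2
      ≤ (if b = b' then #{a : ι → K | a ⬝ᵥ b = lam} * q ^ 2 else 0) + Q := by
    intro b b'
    split_ifs with h
    · subst h; simp
    · exact (card_filter_dotProduct_eq_and_eq_mul_le h hlam).trans (Nat.le_add_left _ _)
  calc (∑ a, dotCount B lam a ^ 2) * q ^ 2
      ≤ ∑ b ∈ B, ∑ b' ∈ B,
          ((if b = b' then #{a : ι → K | a ⬝ᵥ b = lam} * q ^ 2 else 0) + Q) := by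
        rw [sum_dotCount_sq_eq, sum_mul]
        gcongr with b _
        rw [sum_mul]
        gcongr with b' _
        exact hpair b b'
    _ = (∑ b ∈ B, #{a : ι → K | a ⬝ᵥ b = lam}) * q * q + #B ^ 2 * Q := by
        rw [sum_congr rfl fun b hb => by rw [sum_add_distrib, sum_ite_eq, if_pos hb],
          sum_add_distrib, sum_const, sum_const, smul_eq_mul, smul_eq_mul, ← sum_mul]
        ring
    _ = _ := by rw [sum_card_filter_dotProduct_eq_mul B hlam]

theorem abs_card_filter_dotProduct_eq_sub_le (A B : Finset (ι → K)) {lam : K}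
    (hlam : lam ≠ 0) :
    |(#{ab ∈ A ×ˢ B | ab.1 ⬝ᵥ ab.2 = lam} : ℝ) - #A * #B / Fintype.card K|
      ≤ √(#A * #B * Fintype.card K ^ Fintype.card ι) := by
  set q := Fintype.card K
  have hq : (2 : ℝ) ≤ q := by exact_mod_cast Fintype.one_lt_card
  have hcard : Fintype.card (ι → K) = q ^ Fintype.card ι := Fintype.card_fun
  have hB : #B ≤ #(B.erase 0) + 1 := by have := pred_card_le_card_erase (s := B) (a := 0); omega
  have hvar := sum_sub_div_sq_le (fun a => (dotCount B lam a : ℝ)) hq (m := #(B.erase 0))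
    (β := #B) (Nat.cast_nonneg _) (by exact_mod_cast card_erase_le) (by exact_mod_cast hB)
    (by rw [hcard]; exact_mod_cast sum_dotCount_mul B hlam)
    (by rw [hcard]; exact_mod_cast sum_dotCount_sq_mul_le B hlam)
  calc |(#{ab ∈ A ×ˢ B | ab.1 ⬝ᵥ ab.2 = lam} : ℝ) - #A * #B / q|
      = |∑ a ∈ A, (dotCount B lam a : ℝ) - #A * (#B / q)| := by
        rw [card_filter_product_dotProduct_eq, mul_div_assoc]; push_cast; rfl
    _ ≤ √(#A * ∑ a, ((dotCount B lam a : ℝ) - #B / q) ^ 2) :=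
        abs_sum_sub_card_mul_le_sqrt _ _ _
    _ ≤ √(#A * (2 * #B * Fintype.card (ι → K) / q)) := by gcongr
    _ ≤ √(#A * #B * q ^ Fintype.card ι) := by
        rw [hcard, mul_assoc (#A : ℝ)]
        push_cast
        gcongr
        rw [div_le_iff₀ (by linarith)]
        have hQ : (0 : ℝ) ≤ q ^ Fintype.card ι := by positivity
        nlinarith [mul_nonneg (mul_nonneg (#B).cast_nonneg hQ) (sub_nonneg.2 hq)]

end FiniteField

/-- incidence bound for `a₁b₁ + ⋯ + aₙbₙ = λ`, `q` odd prime, `n ≥ 4`: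
`|I_λ(𝒜,ℬ) - |𝒜||ℬ|/(q(1-q^{-n}))| ≪ q^{n-1} q^{-(n-3)/4} √(|𝒜||ℬ|)` with an
absolute implied constant. -/
theorem stmt14 : ∃ C : ℝ, 0 < C ∧
    ∀ (q n : ℕ) (_ : Fact (Nat.Prime q)) (_ : q ≠ 2) (_ : 4 ≤ n)
      (lam : ZMod q) (_ : IsUnit lam) (A B : Finset (Fin n → ZMod q)),
      |(((A ×ˢ B).filter (fun ab => ∑ i, ab.1 i * ab.2 i = lam)).card : ℝ)
          - (A.card : ℝ) * B.card / ((q : ℝ) * (1 - ((q : ℝ))⁻¹ ^ n))|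
        ≤ C * (q : ℝ) ^ (n - 1) * ((q : ℝ) ^ (n - 3)) ^ (-(1 : ℝ) / 4)
            * Real.sqrt ((A.card : ℝ) * B.card) := by
  refine ⟨2, two_pos, fun q n hq _ hn lam hlam A B => ?_⟩
  have hq2 : (2 : ℝ) ≤ q := by exact_mod_cast hq.out.two_le
  have hcount := abs_card_filter_dotProduct_eq_sub_le A B hlam.ne_zero
  rw [ZMod.card, Fintype.card_fin] at hcount
  have hA : (#A : ℝ) ≤ q ^ n := by
    exact_mod_cast (card_le_univ A).trans_eq (by simp [ZMod.card])
  have hB : (#B : ℝ) ≤ q ^ n := by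
    exact_mod_cast (card_le_univ B).trans_eq (by simp [ZMod.card])
  have hmain := abs_div_sub_div_one_sub_inv_pow_le hq2 (by omega) (by positivity)
    (show (#A * #B : ℝ) ≤ (q ^ n) ^ 2 by rw [sq]; gcongr)
  have hQ : 1 ≤ √((q : ℝ) ^ n) := Real.one_le_sqrt.2 (one_le_pow₀ (by linarith))
  calc _ ≤ √(#A * #B * (q : ℝ) ^ n) + √(#A * #B : ℝ) :=
        (abs_sub_le _ _ _).trans (add_le_add hcount hmain)
    _ ≤ 2 * √((q : ℝ) ^ n) * √(#A * #B : ℝ) := by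
        rw [Real.sqrt_mul (by positivity)]
        nlinarith [Real.sqrt_nonneg (#A * #B : ℝ)]
    _ ≤ _ := by
        rw [mul_assoc 2 ((q : ℝ) ^ (n - 1))]
        gcongr
        exact sqrt_pow_le_pow_mul_rpow (by linarith) (by omega)
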